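/- arXiv:2506.19509 — 3 statements merged into one kernel-verified Lean document; each statement's English description precedes it below -/
import Mathlib

section
/- Let E be a finite-dimensional real normed vector space, and let X, Y : E → E be smooth vector fields on E. Assume X admits a smooth global flow φ : ℝ × E → E, i.e. φ(0,·) = id_E, ∂φ/∂t (t,p) = X(φ(t,p)) for all (t,p), and each time-t map φ_t := φ(t,·) is a bijection of E with inverse φ_{-t}. Define the pushforward vector field ((φ_t)_*Y)(p) := Dφ_t(φ_{-t}(p))·Y(φ_{-t}(p)), where D denotes the Fréchet derivative. Then for every p ∈ E and every t ∈ ℝ, the map t ↦ ((φ_t)_*Y)(p) is differentiable and (d/dt)((φ_t)_*Y)(p) = ((φ_t)_*[Y,X])(p), where the Lie bracket of vector fields is [Y,X](q) := DX(q)·Y(q) − DY(q)·X(q). -/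
noncomputable section

/-- Let `X`, `Y` be smooth vector fields on a finite-dimensional real normed
space `E`, and let `φ` be a smooth global flow of `X`. Then for every point `p` and time `t`,
the map `t ↦ ((φ_t)_* Y)(p)` is differentiable with derivative `((φ_t)_* [Y, X])(p)`, where
`((φ_t)_* W)(p) = Dφ_t(φ_{-t}(p)) (W (φ_{-t}(p)))` and `[Y, X](q) = DX(q)(Y q) − DY(q)(X q)`. -/
theorem hasDerivAt_pushforward_flow
    {E : Type*} [NormedAddCommGroup E] [NormedSpace ℝ E] [FiniteDimensional ℝ E]
    (X Y : E → E) (hX : ContDiff ℝ (⊤ : ℕ∞) X) (hY : ContDiff ℝ (⊤ : ℕ∞) Y)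
    (φ : ℝ → E → E)
    (hφ_smooth : ContDiff ℝ (⊤ : ℕ∞) (fun p : ℝ × E => φ p.1 p.2))
    (hφ_zero : ∀ p : E, φ 0 p = p)
    (hφ_flow : ∀ (t : ℝ) (p : E), HasDerivAt (fun s => φ s p) (X (φ t p)) t)
    (hφ_inv : ∀ (t : ℝ) (p : E), φ (-t) (φ t p) = p ∧ φ t (φ (-t) p) = p) :
    ∀ (p : E) (t : ℝ),
      HasDerivAt (fun s : ℝ => fderiv ℝ (φ s) (φ (-s) p) (Y (φ (-s) p)))
        (fderiv ℝ (φ t) (φ (-t) p)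
          (fderiv ℝ X (φ (-t) p) (Y (φ (-t) p)) - fderiv ℝ Y (φ (-t) p) (X (φ (-t) p)))) t := by
  intro p t
  set F : ℝ × E → E := fun z => φ z.1 z.2 with hFdef
  have hFd : Differentiable ℝ F := hφ_smooth.differentiable (by simp)
  have hF1 : ∀ z : ℝ × E, HasFDerivAt F (fderiv ℝ F z) z := fun z => (hFd z).hasFDerivAt
  have hDF : ContDiff ℝ (⊤ : ℕ∞) (fderiv ℝ F) := hφ_smooth.fderiv_right (by simp)
  have hDF1 : ∀ z : ℝ × E, HasFDerivAt (fderiv ℝ F) (fderiv ℝ (fderiv ℝ F) z) z :=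
    fun z => ((hDF.differentiable (by simp)) z).hasFDerivAt
  have hXd : ∀ q : E, HasFDerivAt X (fderiv ℝ X q) q :=
    fun q => ((hX.differentiable (by simp)) q).hasFDerivAt
  have hYd : ∀ q : E, HasFDerivAt Y (fderiv ℝ Y q) q :=
    fun q => ((hY.differentiable (by simp)) q).hasFDerivAt
  -- time-slot of the total derivative is the vector field
  have hslot : ∀ z : ℝ × E, fderiv ℝ F z ((1:ℝ), (0:E)) = X (F z) := by
    intro z
    have hγ : HasDerivAt (fun s : ℝ => (s, z.2)) ((1:ℝ), (0:E)) z.1 :=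
      HasDerivAt.prodMk (hasDerivAt_id z.1) (hasDerivAt_const z.1 z.2)
    have h1 : HasDerivAt (fun s => F (s, z.2)) (fderiv ℝ F z ((1:ℝ), (0:E))) z.1 :=
      by have := (hF1 z).comp_hasDerivAt z.1 hγ; exact this
    exact h1.unique (hφ_flow z.1 z.2)
  -- space-slot of the total derivative is the derivative of the time-t map
  have hpar : ∀ (s : ℝ) (q : E), HasFDerivAt (φ s)
      ((fderiv ℝ F (s, q)).comp (ContinuousLinearMap.inr ℝ ℝ E)) q := by
    intro s q
    have hγ : HasFDerivAt (fun q' : E => ((s:ℝ), q')) (ContinuousLinearMap.inr ℝ ℝ E) q :=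
      HasFDerivAt.prodMk (hasFDerivAt_const s q) (hasFDerivAt_id q)
    exact (hF1 (s, q)).comp q hγ
  have hfφ : ∀ (s : ℝ) (q : E), fderiv ℝ (φ s) q
      = (fderiv ℝ F (s, q)).comp (ContinuousLinearMap.inr ℝ ℝ E) :=
    fun s q => (hpar s q).fderiv
  -- invariance of X under its own flow
  have hinv : ∀ z : ℝ × E, fderiv ℝ F z ((0:ℝ), X z.2) = X (F z) := by
    rintro ⟨s, r⟩
    set q := φ s r with hq
    have hγ : HasDerivAt (fun u : ℝ => (-u, φ u q)) ((-1 : ℝ), X (φ (-s) q)) (-s) :=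
      HasDerivAt.prodMk (hasDerivAt_neg (-s)) (hφ_flow (-s) q)
    have hc0 : HasDerivAt (fun u : ℝ => F (-u, φ u q))
        (fderiv ℝ F (-(-s), φ (-s) q) ((-1:ℝ), X (φ (-s) q))) (-s) :=
      by have := (hF1 (-(-s), φ (-s) q)).comp_hasDerivAt (-s) hγ; exact this
    have hcconst : HasDerivAt (fun u : ℝ => F (-u, φ u q)) 0 (-s) := by
      have hcq : (fun u : ℝ => F (-u, φ u q)) = fun _ => q :=
        funext fun u => (hφ_inv u q).1
      rw [hcq]; exact hasDerivAt_const _ _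
    have key : fderiv ℝ F (-(-s), φ (-s) q) ((-1:ℝ), X (φ (-s) q)) = 0 := hc0.unique hcconst
    have hr : φ (-s) q = r := (hφ_inv s r).1
    rw [neg_neg, hr] at key
    have hsplit : ((-1:ℝ), X r) = ((0:ℝ), X r) - ((1:ℝ), (0:E)) := by
      simp [Prod.ext_iff]
    rw [hsplit, map_sub, hslot (s, r)] at key
    exact sub_eq_zero.mp key
  set a := φ (-t) p with ha_def
  set z₀ : ℝ × E := (t, a) with hz₀
  -- symmetry of the second derivative
  have hsymm : ∀ v w : ℝ × E,
      fderiv ℝ (fderiv ℝ F) z₀ v w = fderiv ℝ (fderiv ℝ F) z₀ w v :=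
    second_derivative_symmetric hF1 (hDF1 z₀)
  -- derivative of z ↦ X (F z)
  have happ2 : HasFDerivAt (fun z : ℝ × E => X (F z))
      ((fderiv ℝ X (F z₀)).comp (fderiv ℝ F z₀)) z₀ :=
    (hXd (F z₀)).comp z₀ (hF1 z₀)
  -- mixed partial 1
  have hmixed1 : ∀ v : ℝ × E, fderiv ℝ (fderiv ℝ F) z₀ v ((1:ℝ), (0:E))
      = fderiv ℝ X (F z₀) (fderiv ℝ F z₀ v) := by
    intro v
    have happ1 : HasFDerivAt (fun z : ℝ × E => fderiv ℝ F z ((1:ℝ), (0:E)))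
        (((fderiv ℝ F z₀).comp (0 : (ℝ × E) →L[ℝ] (ℝ × E)))
          + (fderiv ℝ (fderiv ℝ F) z₀).flip ((1:ℝ), (0:E))) z₀ :=
      (hDF1 z₀).clm_apply (hasFDerivAt_const _ _)
    have hfun : (fun z : ℝ × E => fderiv ℝ F z ((1:ℝ), (0:E))) = fun z => X (F z) :=
      funext fun z => hslot z
    rw [hfun] at happ1
    have h := ContinuousLinearMap.ext_iff.mp (happ1.unique happ2) v
    simpa using h
  -- mixed partial 2 (differentiated invariance)
  have hmixed2 : ∀ v : E, fderiv ℝ (fderiv ℝ F) z₀ ((0:ℝ), v) ((0:ℝ), X a)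
      = fderiv ℝ X (F z₀) (fderiv ℝ F z₀ ((0:ℝ), v))
        - fderiv ℝ F z₀ ((0:ℝ), fderiv ℝ X a v) := by
    intro v
    have hu_X : HasFDerivAt (fun z : ℝ × E => ((0:ℝ), X z.2))
        ((0 : (ℝ × E) →L[ℝ] ℝ).prod
          ((fderiv ℝ X a).comp (ContinuousLinearMap.snd ℝ ℝ E))) z₀ :=
      HasFDerivAt.prodMk (hasFDerivAt_const (0:ℝ) z₀) ((hXd a).comp z₀ hasFDerivAt_snd)
    have happ3 : HasFDerivAt (fun z : ℝ × E => fderiv ℝ F z ((0:ℝ), X z.2))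
        (((fderiv ℝ F z₀).comp ((0 : (ℝ × E) →L[ℝ] ℝ).prod
            ((fderiv ℝ X a).comp (ContinuousLinearMap.snd ℝ ℝ E))))
          + (fderiv ℝ (fderiv ℝ F) z₀).flip ((0:ℝ), X a)) z₀ :=
      (hDF1 z₀).clm_apply hu_X
    have hfun : (fun z : ℝ × E => fderiv ℝ F z ((0:ℝ), X z.2)) = fun z => X (F z) :=
      funext fun z => hinv z
    rw [hfun] at happ3
    have h := ContinuousLinearMap.ext_iff.mp (happ3.unique happ2) ((0:ℝ), v)
    simp only [ContinuousLinearMap.add_apply, ContinuousLinearMap.comp_apply,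
      ContinuousLinearMap.flip_apply, ContinuousLinearMap.prod_apply,
      ContinuousLinearMap.zero_apply, ContinuousLinearMap.coe_snd'] at h
    exact eq_sub_of_add_eq' h
  -- key second-derivative computation
  have e1 : fderiv ℝ (fderiv ℝ F) z₀ ((1:ℝ), -X a) ((0:ℝ), Y a)
      = fderiv ℝ F z₀ ((0:ℝ), fderiv ℝ X a (Y a)) := by
    have hsplit : ((1:ℝ), -X a) = ((1:ℝ), (0:E)) - ((0:ℝ), X a) := by
      simp [Prod.ext_iff]
    rw [hsplit, map_sub, ContinuousLinearMap.sub_apply,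
      hsymm ((1:ℝ), (0:E)) ((0:ℝ), Y a), hsymm ((0:ℝ), X a) ((0:ℝ), Y a),
      hmixed1 ((0:ℝ), Y a), hmixed2 (Y a)]
    exact sub_sub_cancel _ _
  -- the main derivative
  have hu_Y : HasFDerivAt (fun z : ℝ × E => ((0:ℝ), Y z.2))
      ((0 : (ℝ × E) →L[ℝ] ℝ).prod
        ((fderiv ℝ Y a).comp (ContinuousLinearMap.snd ℝ ℝ E))) z₀ :=
    HasFDerivAt.prodMk (hasFDerivAt_const (0:ℝ) z₀) ((hYd a).comp z₀ hasFDerivAt_snd)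
  have hG : HasFDerivAt (fun z : ℝ × E => fderiv ℝ F z ((0:ℝ), Y z.2))
      (((fderiv ℝ F z₀).comp ((0 : (ℝ × E) →L[ℝ] ℝ).prod
          ((fderiv ℝ Y a).comp (ContinuousLinearMap.snd ℝ ℝ E))))
        + (fderiv ℝ (fderiv ℝ F) z₀).flip ((0:ℝ), Y a)) z₀ :=
    (hDF1 z₀).clm_apply hu_Y
  have ha' : HasDerivAt (fun s : ℝ => φ (-s) p) (-X a) t := by
    have h1 : HasDerivAt (fun u : ℝ => φ u p) (X (φ (-t) p)) (-t) := hφ_flow (-t) p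
    have h2 : HasDerivAt (fun s : ℝ => -s) (-1 : ℝ) t := hasDerivAt_neg t
    have h3 := h1.scomp t h2
    simpa [ha_def, Function.comp_def] using h3
  have hγt : HasDerivAt (fun s : ℝ => ((s : ℝ), φ (-s) p)) (((1:ℝ), -X a) : ℝ × E) t :=
    HasDerivAt.prodMk (hasDerivAt_id t) ha'
  have hmain : HasDerivAt (fun s : ℝ => fderiv ℝ F (s, φ (-s) p) ((0:ℝ), Y (φ (-s) p)))
      ((((fderiv ℝ F z₀).comp ((0 : (ℝ × E) →L[ℝ] ℝ).prod
          ((fderiv ℝ Y a).comp (ContinuousLinearMap.snd ℝ ℝ E))))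
        + (fderiv ℝ (fderiv ℝ F) z₀).flip ((0:ℝ), Y a)) (((1:ℝ), -X a))) t :=
    by have := hG.comp_hasDerivAt t hγt; exact this
  have hfeq : (fun s : ℝ => fderiv ℝ (φ s) (φ (-s) p) (Y (φ (-s) p)))
      = fun s : ℝ => fderiv ℝ F (s, φ (-s) p) ((0:ℝ), Y (φ (-s) p)) := by
    funext s
    rw [hfφ s (φ (-s) p)]
    rfl
  rw [hfeq, hfφ t a]
  convert hmain using 1
  simp only [ContinuousLinearMap.add_apply, ContinuousLinearMap.comp_apply,
    ContinuousLinearMap.flip_apply, ContinuousLinearMap.prod_apply,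
    ContinuousLinearMap.zero_apply, ContinuousLinearMap.coe_snd',
    ContinuousLinearMap.inr_apply]
  rw [e1, map_neg]
  rw [show ((0:ℝ), fderiv ℝ X a (Y a) - fderiv ℝ Y a (X a))
      = ((0:ℝ), -(fderiv ℝ Y a (X a))) + ((0:ℝ), fderiv ℝ X a (Y a)) by
    simp [Prod.ext_iff, sub_eq_neg_add], map_add]
end
end

section
/- Let M be a finite-dimensional Hausdorff smooth manifold without boundary and 𝓕 a singular foliation on M. Then every element of the global hull is an infinitesimal symmetry of 𝓕: for every X ∈ 𝓕̂ and every W ∈ 𝓕, the Lie bracket [X,W] belongs to 𝓕. -/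
open scoped Manifold Topology
open Set

noncomputable section

variable (E : Type*) [NormedAddCommGroup E] [NormedSpace ℝ E]
  (M : Type*) [TopologicalSpace M] [ChartedSpace E M]
  [IsManifold 𝓘(ℝ, E) (⊤ : ℕ∞) M]

/-- A smooth vector field on a manifold `M` modeled on the normed space `E`
(all tangent spaces being canonically identified with `E`). -/
def IsSmoothVectorField (V : M → E) : Prop :=
  ContMDiff 𝓘(ℝ, E) 𝓘(ℝ, E).tangent (⊤ : ℕ∞)
    (fun x => (⟨x, V x⟩ : TangentBundle 𝓘(ℝ, E) M))

/-- The Lie bracket of two vector fields on `M`, computed in the preferred chart around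
each point: pull both fields back to the model space `E` via the extended chart, take the
Lie bracket of vector fields there, and push the result back to `M` by the inverse chart. -/
def mLieBracket (V W : M → E) : M → E := fun x₀ =>
  let c := extChartAt 𝓘(ℝ, E) x₀
  let pb : (M → E) → E → E := fun U y => mfderiv 𝓘(ℝ, E) 𝓘(ℝ, E) c (c.symm y) (U (c.symm y))
  mfderiv 𝓘(ℝ, E) 𝓘(ℝ, E) c.symm (c x₀)
    (show E from VectorField.lieBracket ℝ (pb V) (pb W) (c x₀))

/-- A singular foliation on `M`: a `C^∞(M)`-submodule of the compactly supported smooth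
vector fields on `M` which is involutive and locally finitely generated. -/
structure SingularFoliation where
  carrier : Set (M → E)
  smooth_mem : ∀ V ∈ carrier, IsSmoothVectorField E M V
  compactSupport_mem : ∀ V ∈ carrier, HasCompactSupport V
  zero_mem : (fun _ => (0 : E)) ∈ carrier
  add_mem : ∀ V ∈ carrier, ∀ W ∈ carrier, (fun x => V x + W x) ∈ carrier
  smul_mem : ∀ f : M → ℝ, ContMDiff 𝓘(ℝ, E) 𝓘(ℝ, ℝ) (⊤ : ℕ∞) f →
    ∀ V ∈ carrier, (fun x => f x • V x) ∈ carrier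
  involutive : ∀ V ∈ carrier, ∀ W ∈ carrier, mLieBracket E M V W ∈ carrier
  locally_finitely_generated : ∀ p : M, ∃ U : Set M, IsOpen U ∧ p ∈ U ∧
    ∃ (k : ℕ) (Y : Fin k → M → E),
      (∀ i, ContMDiffOn 𝓘(ℝ, E) 𝓘(ℝ, E).tangent (⊤ : ℕ∞)
        (fun x => (⟨x, Y i x⟩ : TangentBundle 𝓘(ℝ, E) M)) U) ∧
      {Z | Z ∈ carrier ∧ tsupport Z ⊆ U} =
        {Z | ∃ f : Fin k → M → ℝ,
          (∀ i, ContMDiff 𝓘(ℝ, E) 𝓘(ℝ, ℝ) (⊤ : ℕ∞) (f i) ∧ HasCompactSupport (f i) ∧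
            tsupport (f i) ⊆ U) ∧
          Z = fun x => ∑ i, f i x • Y i x}

variable {E M}

/-- Membership in the global hull `𝓕̂` of a singular foliation: a smooth vector field `X`
such that `f • X ∈ 𝓕` for every compactly supported smooth function `f`. -/
def SingularFoliation.MemGlobalHull (F : SingularFoliation E M) (X : M → E) : Prop :=
  IsSmoothVectorField E M X ∧
    ∀ f : M → ℝ, ContMDiff 𝓘(ℝ, E) 𝓘(ℝ, ℝ) (⊤ : ℕ∞) f → HasCompactSupport f →
      (fun x => f x • X x) ∈ F.carrier


/-!
Choose a smooth compactly supported `f` equal to `1` near the compact support of `W`; then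
`f • X ∈ 𝓕`, so `[f • X, W] ∈ 𝓕` by involutivity. The bracket is local: near `tsupport W` the
fields `f • X` and `X` agree, and away from it `W` vanishes on a neighbourhood, so both brackets
vanish there. Hence `[X, W] = [f • X, W]`.
-/

open Filter

open scoped ContDiff

section Bump

variable {E : Type*} [NormedAddCommGroup E] [NormedSpace ℝ E] [FiniteDimensional ℝ E]
  {H : Type*} [TopologicalSpace H] {I : ModelWithCorners ℝ E H}
  {M : Type*} [TopologicalSpace M] [ChartedSpace H M] [IsManifold I ∞ M] [T2Space M]

theorem IsCompact.exists_contMDiff_hasCompactSupport_eventuallyEq_one {K : Set M}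
    (hK : IsCompact K) :
    ∃ f : M → ℝ, ContMDiff I 𝓘(ℝ) ∞ f ∧ HasCompactSupport f ∧ f =ᶠ[𝓝ˢ K] 1 := by
  have b : ∀ x : M, SmoothBumpFunction I x := fun x => Classical.arbitrary _
  -- `1 - ∏ (1 - bₓ)` over a finite cover of `K` by the open sets where some `bₓ` is locally `1`
  set O : M → Set M := fun x => {y | b x =ᶠ[𝓝 y] 1}
  have hO : ∀ x, O x ∈ 𝓝 x := fun x =>
    isOpen_setOfPred_eventually_nhds.mem_nhds (b x).eventuallyEq_one
  obtain ⟨t, -, hKt⟩ := hK.elim_nhds_subcover O fun x _ => hO x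
  refine ⟨fun y => 1 - ∏ x ∈ t, (1 - b x y), ?_, ?_, ?_⟩
  · exact contMDiff_const.sub <| contMDiff_finsetProd fun x _ =>
      contMDiff_const.sub (b x).contMDiff
  · refine HasCompactSupport.intro (t.isCompact_biUnion fun x _ => (b x).hasCompactSupport)
      fun y hy => ?_
    simp only [mem_iUnion, not_exists] at hy
    rw [Finset.prod_eq_one fun x hx => by rw [image_eq_zero_of_notMem_tsupport (hy x hx), sub_zero],
      sub_self]
  · rw [EventuallyEq, eventually_nhdsSet_iff_forall]
    intro y hy
    obtain ⟨x, hx, hxy⟩ := mem_iUnion₂.1 (hKt hy)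
    filter_upwards [show b x =ᶠ[𝓝 y] 1 from hxy] with z hz
    rw [Finset.prod_eq_zero hx (by rw [hz, Pi.one_apply, sub_self]), sub_zero, Pi.one_apply]

end Bump

section LieBracketLocality

variable {E : Type*} [NormedAddCommGroup E] [NormedSpace ℝ E]
  {M : Type*} [TopologicalSpace M] [ChartedSpace E M]

theorem mLieBracket_congr_of_eventuallyEq {V V' W W' : M → E} {x : M}
    (hV : V =ᶠ[𝓝 x] V') (hW : W =ᶠ[𝓝 x] W') :
    mLieBracket E M V W x = mLieBracket E M V' W' x := by
  set c := extChartAt 𝓘(ℝ, E) x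
  have hc : Tendsto c.symm (𝓝 (c x)) (𝓝 x) := by
    simpa only [c, extChartAt_to_inv] using (continuousAt_extChartAt_symm x).tendsto
  have pullback_congr : ∀ {U U' : M → E}, U =ᶠ[𝓝 x] U' →
      (fun y => mfderiv 𝓘(ℝ, E) 𝓘(ℝ, E) c (c.symm y) (U (c.symm y))) =ᶠ[𝓝 (c x)]
        fun y => mfderiv 𝓘(ℝ, E) 𝓘(ℝ, E) c (c.symm y) (U' (c.symm y)) := fun hU => by
    filter_upwards [hc.eventually hU] with y hy
    rw [hy]
  simp only [mLieBracket]
  rw [(pullback_congr hV).lieBracket_vectorField_eq (pullback_congr hW)]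

theorem mLieBracket_zero_right (V : M → E) : mLieBracket E M V (fun _ => 0) = fun _ => 0 := by
  funext x
  set c := extChartAt 𝓘(ℝ, E) x
  have pullback_zero :
      (fun y => mfderiv 𝓘(ℝ, E) 𝓘(ℝ, E) c (c.symm y) ((fun _ => (0 : E)) (c.symm y))) = 0 :=
    funext fun y => map_zero _
  simp only [mLieBracket]
  rw [pullback_zero]
  -- not a `rw`: this `0` is the zero of tangent-space-valued fields, which does not unify
  -- reducibly with the zero of `E → E` in `lieBracket_zero_right`
  exact (congrArg _ (congrFun VectorField.lieBracket_zero_right _)).trans (map_zero _)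

theorem mLieBracket_congr_left_of_eventuallyEq_nhdsSet_tsupport {V V' W : M → E}
    (h : V =ᶠ[𝓝ˢ (tsupport W)] V') : mLieBracket E M V W = mLieBracket E M V' W := by
  funext x
  by_cases hx : x ∈ tsupport W
  · exact mLieBracket_congr_of_eventuallyEq (h.filter_mono (nhds_le_nhdsSet hx)) .rfl
  · have hW : W =ᶠ[𝓝 x] fun _ => 0 := notMem_tsupport_iff_eventuallyEq.1 hx
    rw [mLieBracket_congr_of_eventuallyEq .rfl hW, mLieBracket_congr_of_eventuallyEq .rfl hW,
      mLieBracket_zero_right, mLieBracket_zero_right]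

end LieBracketLocality

/-- Every element of the global hull `𝓕̂` of a singular foliation `𝓕` is an
infinitesimal symmetry of `𝓕`: `[X, W] ∈ 𝓕` for all `X ∈ 𝓕̂` and `W ∈ 𝓕`. -/
theorem globalHull_infinitesimal_symmetry
    {E : Type*} [NormedAddCommGroup E] [NormedSpace ℝ E] [FiniteDimensional ℝ E]
    {M : Type*} [TopologicalSpace M] [ChartedSpace E M]
    [IsManifold 𝓘(ℝ, E) (⊤ : ℕ∞) M] [T2Space M]
    (F : SingularFoliation E M)
    (X : M → E) (hX : F.MemGlobalHull X)
    (W : M → E) (hW : W ∈ F.carrier) :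
    mLieBracket E M X W ∈ F.carrier := by
  obtain ⟨f, hf, hf_supp, hf_one⟩ :=
    (F.compactSupport_mem W hW).exists_contMDiff_hasCompactSupport_eventuallyEq_one (I := 𝓘(ℝ, E))
  have hfX : (fun x => f x • X x) =ᶠ[𝓝ˢ (tsupport W)] X :=
    hf_one.mono fun x hx => by simp only [hx, Pi.one_apply, one_smul]
  rw [← mLieBracket_congr_left_of_eventuallyEq_nhdsSet_tsupport hfX]
  exact F.involutive _ (hX.2 f hf hf_supp) W hW
end
end

section
/- Let M be a finite-dimensional second-countable Hausdorff smooth manifold without boundary, and let Y_1,…,Y_k be finitely many smooth vector fields on M. Let 𝓖 denote the C^∞_c(M)-span of Y_1,…,Y_k inside the smooth vector fields on M. Then a smooth vector field X on M satisfies fX ∈ 𝓖 for every f ∈ C^∞_c(M) if and only if X = Σ_{i=1}^k g_i Y_i for some functions g_1,…,g_k ∈ C^∞(M). In other words, the hull {X ∈ 𝔛(M) : fX ∈ 𝓖 for all f ∈ C^∞_c(M)} equals the C^∞(M)-span of Y_1,…,Y_k. -/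
open scoped Manifold Topology
open Set

noncomputable section

variable (E : Type*) [NormedAddCommGroup E] [NormedSpace ℝ E]
  (M : Type*) [TopologicalSpace M] [ChartedSpace E M]
  [IsManifold 𝓘(ℝ, E) (⊤ : ℕ∞) M]

variable {E M}

/-! Fix a smooth partition of unity `ρ` by compactly supported functions. Applying the hypothesis
to `f = ρ j` writes `ρ j • X = ∑ i, g j i • Y i`; multiplying by `ρ j` and summing over `j` gives
`σ • X = ∑ i, (∑ᶠ j, ρ j * g j i) • Y i` with `σ = ∑ᶠ j, ρ j ^ 2`. The factor `ρ j` makes these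
sums locally finite however large the supports of the `g j i` are, and `σ` is smooth and
positive, so dividing by it gives smooth coefficients for `X`. -/

open scoped ContDiff

namespace SmoothPartitionOfUnity

variable {ι E H M F : Type*} [NormedAddCommGroup E] [NormedSpace ℝ E] [TopologicalSpace H]
  {I : ModelWithCorners ℝ E H} [TopologicalSpace M] [ChartedSpace H M]
  [NormedAddCommGroup F] [NormedSpace ℝ F]

theorem exists_hasCompactSupport [FiniteDimensional ℝ E] [IsManifold I ∞ M] [T2Space M]
    [SigmaCompactSpace M] :
    ∃ ρ : SmoothPartitionOfUnity M I M univ, ∀ j, HasCompactSupport (ρ j) := by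
  have : LocallyCompactSpace H := I.locallyCompactSpace
  have : LocallyCompactSpace M := ChartedSpace.locallyCompactSpace H M
  choose U hUo hxU hUc using fun x : M => exists_isOpen_mem_isCompact_closure x
  obtain ⟨ρ, hρU⟩ := exists_isSubordinate I isClosed_univ U hUo
    fun x _ => mem_iUnion.2 ⟨x, hxU x⟩
  exact ⟨ρ, fun j =>
    (hUc j).of_isClosed_subset (isClosed_tsupport _) ((hρU j).trans subset_closure)⟩

variable (ρ : SmoothPartitionOfUnity ι I M univ)

theorem finsum_mul_self_pos (x : M) : 0 < ∑ᶠ j, ρ j x * ρ j x := by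
  obtain ⟨j, hj⟩ := ρ.exists_pos_of_mem (mem_univ x)
  simp only [← smul_eq_mul, ← ρ.sum_finsupport_smul_eq_finsum]
  exact Finset.sum_pos' (fun i _ => mul_self_nonneg _)
    ⟨j, (ρ.mem_finsupport x).2 hj.ne', mul_pos hj hj⟩

theorem finsum_mul_self_smul_eq {κ : Type*} [Fintype κ] {X : M → F} {Y : κ → M → F}
    {g : ι → κ → M → ℝ} (hρX : ∀ j x, ρ j x • X x = ∑ i, g j i x • Y i x) (x : M) :
    (∑ᶠ j, ρ j x * ρ j x) • X x = ∑ i, (∑ᶠ j, ρ j x * g j i x) • Y i x := by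
  simp only [← smul_eq_mul, ← ρ.sum_finsupport_smul_eq_finsum]
  calc (∑ j ∈ ρ.finsupport x, ρ j x • ρ j x) • X x
      = ∑ j ∈ ρ.finsupport x, ρ j x • ∑ i, g j i x • Y i x := by
        simp only [Finset.sum_smul, smul_assoc, hρX]
    _ = ∑ i, (∑ j ∈ ρ.finsupport x, ρ j x • g j i x) • Y i x := by
        simp only [Finset.smul_sum, Finset.sum_smul, smul_assoc]
        exact Finset.sum_comm

theorem exists_contMDiff_coeffs_of_forall_smul_eq {κ : Type*} [Fintype κ] {X : M → F}
    {Y : κ → M → F} {g : ι → κ → M → ℝ} (hg : ∀ j i, ContMDiff I 𝓘(ℝ) ∞ (g j i))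
    (hρX : ∀ j x, ρ j x • X x = ∑ i, g j i x • Y i x) :
    ∃ h : κ → M → ℝ, (∀ i, ContMDiff I 𝓘(ℝ) ∞ (h i)) ∧ X = fun x => ∑ i, h i x • Y i x := by
  have hσ : ContMDiff I 𝓘(ℝ) ∞ fun x => ∑ᶠ j, ρ j x * ρ j x :=
    ρ.contMDiff_finsum_smul fun j x _ => (ρ j).contMDiff.contMDiffAt
  refine ⟨fun i x => (∑ᶠ j, ρ j x * ρ j x)⁻¹ * ∑ᶠ j, ρ j x * g j i x, fun i => ?_, ?_⟩
  · exact (hσ.inv₀ fun x => (ρ.finsum_mul_self_pos x).ne').mul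
      (ρ.contMDiff_finsum_smul fun j x _ => (hg j i).contMDiffAt)
  · funext x
    simp only [mul_smul, ← Finset.smul_sum, ← ρ.finsum_mul_self_smul_eq hρX,
      inv_smul_smul₀ (ρ.finsum_mul_self_pos x).ne']

end SmoothPartitionOfUnity

theorem hull_of_span_eq_smooth_span_general
    {E : Type*} [NormedAddCommGroup E] [NormedSpace ℝ E] [FiniteDimensional ℝ E]
    {M : Type*} [TopologicalSpace M] [ChartedSpace E M]
    [IsManifold 𝓘(ℝ, E) (⊤ : ℕ∞) M] [T2Space M] [SecondCountableTopology M]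
    (k : ℕ) (Y : Fin k → M → E)
    (X : M → E) :
    (∀ f : M → ℝ, ContMDiff 𝓘(ℝ, E) 𝓘(ℝ, ℝ) (⊤ : ℕ∞) f → HasCompactSupport f →
      ∃ g : Fin k → M → ℝ,
        (∀ i, ContMDiff 𝓘(ℝ, E) 𝓘(ℝ, ℝ) (⊤ : ℕ∞) (g i) ∧ HasCompactSupport (g i)) ∧
        (fun x => f x • X x) = fun x => ∑ i, g i x • Y i x) ↔
    ∃ g : Fin k → M → ℝ, (∀ i, ContMDiff 𝓘(ℝ, E) 𝓘(ℝ, ℝ) (⊤ : ℕ∞) (g i)) ∧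
      X = fun x => ∑ i, g i x • Y i x := by
  constructor
  · intro hull
    have : LocallyCompactSpace M := ChartedSpace.locallyCompactSpace E M
    obtain ⟨ρ, hρc⟩ := SmoothPartitionOfUnity.exists_hasCompactSupport (I := 𝓘(ℝ, E)) (M := M)
    choose g hg hρX using fun j => hull (ρ j) (ρ j).contMDiff (hρc j)
    exact ρ.exists_contMDiff_coeffs_of_forall_smul_eq (fun j i => (hg j i).1)
      fun j => congrFun (hρX j)
  · rintro ⟨g, hg, rfl⟩ f hf hfc
    refine ⟨fun i x => f x * g i x, fun i => ⟨hf.mul (hg i), hfc.mul_right⟩, ?_⟩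
    funext x
    simp only [Finset.smul_sum, smul_smul]

/-- Let `Y₁, …, Y_k` be finitely many smooth vector fields on `M` and `𝓖`
their `C^∞_c(M)`-span. A smooth vector field `X` satisfies `f • X ∈ 𝓖` for every
`f ∈ C^∞_c(M)` if and only if `X = ∑ i, g i • Y i` for some `g i ∈ C^∞(M)`; that is, the
hull of `𝓖` equals the `C^∞(M)`-span of `Y₁, …, Y_k`. -/
theorem hull_of_span_eq_smooth_span
    {E : Type*} [NormedAddCommGroup E] [NormedSpace ℝ E] [FiniteDimensional ℝ E]
    {M : Type*} [TopologicalSpace M] [ChartedSpace E M]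
    [IsManifold 𝓘(ℝ, E) (⊤ : ℕ∞) M] [T2Space M] [SecondCountableTopology M]
    (k : ℕ) (Y : Fin k → M → E) (hY : ∀ i, IsSmoothVectorField E M (Y i))
    (X : M → E) (hX : IsSmoothVectorField E M X) :
    (∀ f : M → ℝ, ContMDiff 𝓘(ℝ, E) 𝓘(ℝ, ℝ) (⊤ : ℕ∞) f → HasCompactSupport f →
      ∃ g : Fin k → M → ℝ,
        (∀ i, ContMDiff 𝓘(ℝ, E) 𝓘(ℝ, ℝ) (⊤ : ℕ∞) (g i) ∧ HasCompactSupport (g i)) ∧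
        (fun x => f x • X x) = fun x => ∑ i, g i x • Y i x) ↔
    ∃ g : Fin k → M → ℝ, (∀ i, ContMDiff 𝓘(ℝ, E) 𝓘(ℝ, ℝ) (⊤ : ℕ∞) (g i)) ∧
      X = fun x => ∑ i, g i x • Y i x :=
  hull_of_span_eq_smooth_span_general k Y X
end
end
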